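/- Let L ∈ 𝐋 and let V, W ∈ 𝐕(L) with V ≠ 0 and W ≠ 0. Then the limit as u ↓ 0 of ( u²‖V‖_F² + u²‖W‖_F² − d_ABW(L+uV, L+uW)² ) / ( 2u²·‖V‖_F·‖W‖_F ) exists and equals sup_{O ∈ 𝐎*(L,L)} ⟨V, WO⟩_F / ( ‖V‖_F·‖W‖_F ). (This identifies the cosine of the Alexandrov angle between the geodesics u ↦ [L+uV] and u ↦ [L+uW] emanating from [L].) -/

import Mathlib

open Matrix Filter Topology

/-- Square matrices of size `dT × dT`, indexed by blocks: index `(t, i)` is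
row/column `i` within block `t`. -/
abbrev Mat (d T : ℕ) := Matrix (Fin T × Fin d) (Fin T × Fin d) ℝ

/-- The `t`-th diagonal `d × d` block of a `dT × dT` matrix. -/
def blk {d T : ℕ} (A : Mat d T) (t : Fin T) : Matrix (Fin d) (Fin d) ℝ :=
  fun i j => A (t, i) (t, j)

/-- The `t`-th block column of a `dT × dT` matrix, a `dT × d` matrix. -/
def colBlk {d T : ℕ} (A : Mat d T) (t : Fin T) : Matrix (Fin T × Fin d) (Fin d) ℝ :=
  fun p j => A p (t, j)

/-- Membership in `𝐋`: block lower triangular matrices. -/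
def memL {d T : ℕ} (A : Mat d T) : Prop :=
  ∀ (t s : Fin T) (i j : Fin d), t < s → A (t, i) (s, j) = 0

/-- Membership in `𝐎`: block diagonal matrices with orthogonal `d × d` diagonal blocks
(equivalently: block diagonal and orthogonal). -/
def memO {d T : ℕ} (O : Mat d T) : Prop :=
  (∀ (t s : Fin T) (i j : Fin d), t ≠ s → O (t, i) (s, j) = 0) ∧ Oᵀ * O = 1

/-- The Frobenius norm of a real matrix. -/
noncomputable def frobNorm {m n : Type*} [Fintype m] [Fintype n] (A : Matrix m n ℝ) : ℝ :=
  Real.sqrt (∑ i, ∑ j, (A i j) ^ 2)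

/-- The Frobenius inner product of two real matrices. -/
noncomputable def frobInner {m n : Type*} [Fintype m] [Fintype n] (A B : Matrix m n ℝ) : ℝ :=
  ∑ i, ∑ j, A i j * B i j

/-- The adapted Bures–Wasserstein distance `d_ABW(L, M) = inf_{O ∈ 𝐎} ‖L - M O‖_F`. -/
noncomputable def dABW {d T : ℕ} (L M : Mat d T) : ℝ :=
  sInf {r : ℝ | ∃ O : Mat d T, memO O ∧ r = frobNorm (L - M * O)}

/-- The set `𝐎*(L, M)` of optimizers of `inf_{O ∈ 𝐎} ‖L - M O‖_F`. -/
noncomputable def OStar {d T : ℕ} (L M : Mat d T) : Set (Mat d T) :=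
  {O | memO O ∧ frobNorm (L - M * O) = dABW L M}

/-- The set `𝐕(L) = {M P - L : M ∈ 𝐋, P ∈ 𝐎*(L, M)}`. -/
noncomputable def VSet {d T : ℕ} (L : Mat d T) : Set (Mat d T) :=
  {V | ∃ M P : Mat d T, memL M ∧ P ∈ OStar L M ∧ V = M * P - L}

/-- The set `𝒱(L) = {V ∈ 𝐋 : (Vᵀ L)_{t,t} is symmetric for all t}`. -/
def calV {d T : ℕ} (L : Mat d T) : Set (Mat d T) :=
  {V | memL V ∧ ∀ t : Fin T, (blk (Vᵀ * L) t).IsSymm}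

/-- The set `𝐋^reg = {L ∈ 𝐋 : (Lᵀ L)_{t,t} is positive definite for all t}`. -/
def LReg {d T : ℕ} : Set (Mat d T) :=
  {L | memL L ∧ ∀ t : Fin T, (blk (Lᵀ * L) t).PosDef}

/-- The sum of the singular values of a real square matrix `A`,
i.e. the trace of the positive semidefinite square root of `Aᵀ A`. -/
noncomputable def svSum {n : ℕ} (A : Matrix (Fin n) (Fin n) ℝ) : ℝ :=
  ((Matrix.posSemidef_conjTranspose_mul_self A).isHermitian.eigenvectorUnitary.1 *
    diagonal (Real.sqrt ∘ (Matrix.posSemidef_conjTranspose_mul_self A).isHermitian.eigenvalues) *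
    (star (Matrix.posSemidef_conjTranspose_mul_self A).isHermitian.eigenvectorUnitary :
      Matrix (Fin n) (Fin n) ℝ)).trace

/-- The operator norm of a real matrix: the supremum of the euclidean norm `‖A x‖₂`
over the euclidean unit ball. -/
noncomputable def opNorm {m n : Type*} [Fintype m] [Fintype n] (A : Matrix m n ℝ) : ℝ :=
  sSup {r : ℝ | ∃ x : n → ℝ, (∑ j, (x j) ^ 2) ≤ 1 ∧ r = Real.sqrt (∑ i, (A.mulVec x i) ^ 2)}

/-!
For `O ∈ 𝐎` write `h(O) = ‖LO - L‖²`. Expanding the square,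
`‖L + uV - (L + uW)O‖² = h(O) - 2u(⟨V, LO - L⟩ + ⟨W, LOᵀ - L⟩)`
`                        + u²(‖V‖² + ‖W‖² - 2⟨V, WO⟩)`,
and optimality of `P` in `V = MP - L` (compare with `PQᵀ`) gives `⟨V, LQ - L⟩ ≤ h(Q)/2`
for all `Q ∈ 𝐎`, likewise for `W`. So the numerator divided by `2u²` is at least `⟨V, WO⟩`
for each `O ∈ 𝐎*(L, L) = {h = 0}`, and at most
`max_{O ∈ 𝐎} (⟨V, WO⟩ - (1 - 2u)/(2u²) · h(O))`. As `u ↓ 0` the penalty weight blows up,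
and compactness of `𝐎` forces this maximum down to the maximum of `⟨V, WO⟩` over the zero
set of `h`.
-/

lemma IsCompact.eventually_forall_sub_mul_lt {X : Type*} [TopologicalSpace X] {K : Set X}
    (hK : IsCompact K) {f g : X → ℝ} (hf : Continuous f) (hg : Continuous g)
    (hg0 : ∀ x ∈ K, 0 ≤ g x) {a : ℝ} (ha : ∀ x ∈ K, g x = 0 → f x < a) :
    ∀ᶠ c in atTop, ∀ x ∈ K, f x - c * g x < a := by
  have hK' : IsCompact (K ∩ {x | a ≤ f x}) := hK.inter_right (isClosed_le continuous_const hf)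
  rcases (K ∩ {x | a ≤ f x}).eq_empty_or_nonempty with hempty | hne
  · filter_upwards [eventually_ge_atTop 0] with c hc x hx
    have hfx : f x < a := not_le.1 fun h => hempty.subset ⟨hx, h⟩
    nlinarith [mul_nonneg hc (hg0 x hx)]
  obtain ⟨x₀, ⟨hx₀K, hx₀a⟩, hmin⟩ := hK'.exists_isMinOn hne hg.continuousOn
  have hpos : 0 < g x₀ := (hg0 x₀ hx₀K).lt_of_ne' fun h => (ha x₀ hx₀K h).not_ge hx₀a
  obtain ⟨B, hB⟩ := hK.bddAbove_image hf.continuousOn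
  filter_upwards [eventually_ge_atTop 0, eventually_gt_atTop ((B - a) / g x₀)]
    with c hc0 hcB x hx
  by_cases hfx : a ≤ f x
  · have hgx : g x₀ ≤ g x := hmin ⟨hx, hfx⟩
    have hfB : f x ≤ B := hB ⟨x, hx, rfl⟩
    have : B - a < c * g x₀ := (div_lt_iff₀ hpos).1 hcB
    nlinarith
  · nlinarith [mul_nonneg hc0 (hg0 x hx)]

section Frobenius

variable {m n k : Type*} [Fintype m] [Fintype n] [Fintype k]

lemma frobInner_comm (A B : Matrix m n ℝ) : frobInner A B = frobInner B A := by
  simp only [frobInner, mul_comm]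

lemma frobInner_sub_left (A B C : Matrix m n ℝ) :
    frobInner (A - B) C = frobInner A C - frobInner B C := by
  simp [frobInner, sub_mul, Finset.sum_sub_distrib]

lemma frobInner_smul_left (r : ℝ) (A B : Matrix m n ℝ) :
    frobInner (r • A) B = r * frobInner A B := by
  simp [frobInner, Finset.mul_sum, mul_assoc]

lemma frobInner_sub_right (A B C : Matrix m n ℝ) :
    frobInner A (B - C) = frobInner A B - frobInner A C := by
  rw [frobInner_comm, frobInner_sub_left, frobInner_comm B, frobInner_comm C]

lemma frobInner_neg_right (A B : Matrix m n ℝ) : frobInner A (-B) = -frobInner A B := by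
  simp [frobInner]

lemma frobInner_zero_right (A : Matrix m n ℝ) : frobInner A 0 = 0 := by
  simp [frobInner]

lemma frobInner_mul_right (A : Matrix m n ℝ) (B : Matrix m k ℝ) (O : Matrix k n ℝ) :
    frobInner A (B * O) = frobInner (A * Oᵀ) B := by
  simp only [frobInner, mul_apply, transpose_apply, Finset.mul_sum, Finset.sum_mul]
  refine Finset.sum_congr rfl fun i _ => ?_
  rw [Finset.sum_comm]
  exact Finset.sum_congr rfl fun _ _ => Finset.sum_congr rfl fun _ _ => by ring

lemma frobNorm_eq_sqrt (A : Matrix m n ℝ) : frobNorm A = √(frobInner A A) := by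
  simp only [frobNorm, frobInner, sq]

lemma frobNorm_nonneg (A : Matrix m n ℝ) : 0 ≤ frobNorm A := Real.sqrt_nonneg _

lemma frobInner_self_nonneg (A : Matrix m n ℝ) : 0 ≤ frobInner A A :=
  Finset.sum_nonneg fun _ _ => Finset.sum_nonneg fun _ _ => mul_self_nonneg _

lemma frobNorm_sq (A : Matrix m n ℝ) : frobNorm A ^ 2 = frobInner A A := by
  rw [frobNorm_eq_sqrt, Real.sq_sqrt (frobInner_self_nonneg A)]

lemma frobNorm_eq_zero_iff {A : Matrix m n ℝ} : frobNorm A = 0 ↔ A = 0 := by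
  rw [frobNorm_eq_sqrt, Real.sqrt_eq_zero (frobInner_self_nonneg A)]
  refine ⟨fun h => ?_, fun h => by simp [h, frobInner]⟩
  ext i j
  have hi := (Finset.sum_eq_zero_iff_of_nonneg fun i _ =>
    Finset.sum_nonneg fun j _ => mul_self_nonneg (A i j)).1 h i (Finset.mem_univ _)
  exact mul_self_eq_zero.1 <| (Finset.sum_eq_zero_iff_of_nonneg fun j _ =>
    mul_self_nonneg (A i j)).1 hi j (Finset.mem_univ _)

lemma frobNorm_sub_sq (A B : Matrix m n ℝ) :
    frobNorm (A - B) ^ 2 = frobNorm A ^ 2 - 2 * frobInner A B + frobNorm B ^ 2 := by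
  simp only [frobNorm_sq, frobInner_sub_left, frobInner_sub_right, frobInner_comm B A]
  ring

lemma frobNorm_smul_sq (r : ℝ) (A : Matrix m n ℝ) :
    frobNorm (r • A) ^ 2 = r ^ 2 * frobNorm A ^ 2 := by
  simp only [frobNorm_sq, frobInner_smul_left, frobInner_comm A (r • A)]
  ring

lemma frobNorm_sub_comm (A B : Matrix m n ℝ) : frobNorm (A - B) = frobNorm (B - A) := by
  rw [← neg_sub, frobNorm_eq_sqrt, frobNorm_eq_sqrt, frobInner_neg_right, frobInner_comm,
    frobInner_neg_right, neg_neg]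

lemma continuous_frobNorm : Continuous (frobNorm : Matrix m n ℝ → ℝ) := by
  unfold frobNorm; fun_prop

lemma continuous_frobInner_mul (V : Matrix m n ℝ) (W : Matrix m k ℝ) :
    Continuous fun O : Matrix k n ℝ => frobInner V (W * O) := by
  unfold frobInner; fun_prop

variable [DecidableEq n]

lemma frobInner_mul_mul_of_orthogonal (A : Matrix m n ℝ) (B : Matrix m n ℝ) {O : Matrix n n ℝ}
    (hO : Oᵀ * O = 1) : frobInner (A * O) (B * O) = frobInner A B := by
  rw [frobInner_mul_right, Matrix.mul_assoc, mul_eq_one_comm.mp hO, Matrix.mul_one]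

lemma frobNorm_mul_of_orthogonal (A : Matrix m n ℝ) {O : Matrix n n ℝ} (hO : Oᵀ * O = 1) :
    frobNorm (A * O) = frobNorm A := by
  rw [frobNorm_eq_sqrt, frobNorm_eq_sqrt, frobInner_mul_mul_of_orthogonal A A hO]

lemma frobNorm_mul_transpose_sub_self (L : Matrix m n ℝ) {O : Matrix n n ℝ} (hO : Oᵀ * O = 1) :
    frobNorm (L * Oᵀ - L) = frobNorm (L * O - L) := by
  rw [← frobNorm_mul_of_orthogonal (L * Oᵀ - L) hO, Matrix.sub_mul, Matrix.mul_assoc, hO,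
    Matrix.mul_one, frobNorm_sub_comm]

lemma frobNorm_add_smul_sub_mul_sq (L V W : Matrix m n ℝ) {O : Matrix n n ℝ} (hO : Oᵀ * O = 1)
    (u : ℝ) :
    frobNorm (L + u • V - (L + u • W) * O) ^ 2 =
      frobNorm (L * O - L) ^ 2 - 2 * u * (frobInner V (L * O - L) + frobInner W (L * Oᵀ - L))
        + u ^ 2 * (frobNorm V ^ 2 + frobNorm W ^ 2 - 2 * frobInner V (W * O)) := by
  have hsplit : L + u • V - (L + u • W) * O = u • (V - W * O) - (L * O - L) := by
    rw [Matrix.add_mul, Matrix.smul_mul]; module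
  have hcross : frobInner (W * O) (L * O - L) = -frobInner W (L * Oᵀ - L) := by
    rw [frobInner_comm, frobInner_mul_right, Matrix.sub_mul, Matrix.mul_assoc,
      mul_eq_one_comm.mp hO, Matrix.mul_one, frobInner_comm, ← neg_sub, frobInner_neg_right]
  rw [hsplit, frobNorm_sub_sq, frobNorm_smul_sq, frobNorm_sub_sq,
    frobNorm_mul_of_orthogonal W hO, frobInner_smul_left, frobInner_sub_left, hcross]
  ring

end Frobenius

lemma abs_apply_le_one_of_transpose_mul_self_eq_one {n : Type*} [Fintype n] [DecidableEq n]
    {O : Matrix n n ℝ} (hO : Oᵀ * O = 1) (p q : n) : |O p q| ≤ 1 := by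
  have hcol : ∑ r, O r q ^ 2 = 1 := by
    simpa [mul_apply, sq] using congrFun (congrFun hO q) q
  rw [← sq_le_one_iff_abs_le_one, ← hcol]
  exact Finset.single_le_sum (f := fun r => O r q ^ 2) (fun _ _ => sq_nonneg _)
    (Finset.mem_univ p)

section BlockOrthogonal

variable {d T : ℕ}

lemma memO_one : memO (1 : Mat d T) :=
  ⟨fun _ _ _ _ hts => one_apply_ne fun h => hts (congrArg Prod.fst h), by simp⟩

lemma memO_mul {P Q : Mat d T} (hP : memO P) (hQ : memO Q) : memO (P * Q) := by
  refine ⟨fun t s i j hts => ?_, ?_⟩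
  · rw [mul_apply]
    refine Finset.sum_eq_zero fun ⟨r, k⟩ _ => ?_
    by_cases hrt : r = t
    · subst hrt
      rw [hQ.1 r s k j hts, mul_zero]
    · rw [hP.1 t r i k (Ne.symm hrt), zero_mul]
  · rw [transpose_mul, Matrix.mul_assoc, ← Matrix.mul_assoc Pᵀ, hP.2, Matrix.one_mul, hQ.2]

lemma memO_transpose {Q : Mat d T} (hQ : memO Q) : memO Qᵀ :=
  ⟨fun t s i j hts => hQ.1 s t j i (Ne.symm hts), by
    rw [transpose_transpose]; exact mul_eq_one_comm.mp hQ.2⟩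

lemma isClosed_setOf_memO : IsClosed {O : Mat d T | memO O} := by
  have : {O : Mat d T | memO O} = (⋂ (t) (s) (i) (j) (_ : t ≠ s), {O | O (t, i) (s, j) = 0})
      ∩ {O | Oᵀ * O = 1} := by
    ext; simp [memO]
  rw [this]
  refine IsClosed.inter ?_ (isClosed_eq (by fun_prop) continuous_const)
  exact isClosed_iInter fun t => isClosed_iInter fun s => isClosed_iInter fun i =>
    isClosed_iInter fun j => isClosed_iInter fun _ => isClosed_eq (by fun_prop) continuous_const

lemma isCompact_setOf_memO : IsCompact {O : Mat d T | memO O} :=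
  (isCompact_univ_pi fun _ => isCompact_univ_pi fun _ => isCompact_Icc (a := -1) (b := 1))
    |>.of_isClosed_subset isClosed_setOf_memO fun _ hO p _ q _ =>
      abs_le.mp (abs_apply_le_one_of_transpose_mul_self_eq_one hO.2 p q)

lemma dABW_le {L M O : Mat d T} (hO : memO O) : dABW L M ≤ frobNorm (L - M * O) :=
  csInf_le ⟨0, by rintro r ⟨Q, -, rfl⟩; exact frobNorm_nonneg _⟩ ⟨O, hO, rfl⟩

lemma exists_memO_dABW_eq (L M : Mat d T) : ∃ O, memO O ∧ dABW L M = frobNorm (L - M * O) := by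
  obtain ⟨O, hO, hmin⟩ := isCompact_setOf_memO.exists_isMinOn ⟨1, memO_one⟩
    (continuous_frobNorm.comp (by fun_prop) :
      Continuous fun O : Mat d T => frobNorm (L - M * O)).continuousOn
  refine ⟨O, hO, le_antisymm (dABW_le hO) (le_csInf ⟨_, 1, memO_one, rfl⟩ ?_)⟩
  rintro r ⟨Q, hQ, rfl⟩
  exact hmin hQ

lemma dABW_nonneg (L M : Mat d T) : 0 ≤ dABW L M := by
  obtain ⟨O, -, hO⟩ := exists_memO_dABW_eq L M
  exact hO ▸ frobNorm_nonneg _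

lemma dABW_self (L : Mat d T) : dABW L L = 0 :=
  le_antisymm (by simpa [frobNorm] using dABW_le (L := L) (M := L) memO_one) (dABW_nonneg L L)

lemma mem_OStar_self_iff {L O : Mat d T} : O ∈ OStar L L ↔ memO O ∧ L * O = L := by
  show memO O ∧ _ ↔ _
  rw [dABW_self, frobNorm_eq_zero_iff, sub_eq_zero, eq_comm]

lemma isCompact_OStar_self (L : Mat d T) : IsCompact (OStar L L) := by
  have : OStar L L = {O | memO O} ∩ {O | L * O = L} := Set.ext fun _ => mem_OStar_self_iff
  rw [this]
  exact isCompact_setOf_memO.inter_right (isClosed_eq (by fun_prop) continuous_const)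

end BlockOrthogonal

section Angle

variable {d T : ℕ}

lemma frobInner_le_of_mem_VSet {L V Q : Mat d T} (hV : V ∈ VSet L) (hQ : memO Q) :
    frobInner V (L * Q - L) ≤ frobNorm (L * Q - L) ^ 2 / 2 := by
  obtain ⟨M, P, -, hP, rfl⟩ := hV
  have hopt : frobNorm (L - M * P) ≤ frobNorm (L * Q - M * P) :=
    calc frobNorm (L - M * P) = dABW L M := hP.2
      _ ≤ frobNorm (L - M * (P * Qᵀ)) := dABW_le (memO_mul hP.1 (memO_transpose hQ))
      _ = frobNorm (L * Q - M * P) := by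
        rw [← frobNorm_mul_of_orthogonal _ hQ.2, Matrix.sub_mul, Matrix.mul_assoc M,
          Matrix.mul_assoc P, hQ.2, Matrix.mul_one]
  have hsq := pow_le_pow_left₀ (frobNorm_nonneg _) hopt 2
  rw [show L * Q - M * P = (L * Q - L) - (M * P - L) by abel, frobNorm_sub_comm L,
    frobNorm_sub_sq (L * Q - L), frobInner_comm (L * Q - L)] at hsq
  linarith

lemma sq_mul_frobInner_le_of_mem_OStar_self {L V W O : Mat d T} (hO : O ∈ OStar L L) (u : ℝ) :
    2 * u ^ 2 * frobInner V (W * O) ≤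
      u ^ 2 * frobNorm V ^ 2 + u ^ 2 * frobNorm W ^ 2 - dABW (L + u • V) (L + u • W) ^ 2 := by
  obtain ⟨hO, hLO⟩ := mem_OStar_self_iff.1 hO
  have hLOt : L * Oᵀ = L :=
    calc L * Oᵀ = L * O * Oᵀ := by rw [hLO]
      _ = L := by rw [Matrix.mul_assoc, mul_eq_one_comm.mp hO.2, Matrix.mul_one]
  have hd := pow_le_pow_left₀ (dABW_nonneg _ _) (dABW_le (L := L + u • V) (M := L + u • W) hO) 2
  rw [frobNorm_add_smul_sub_mul_sq _ _ _ hO.2, hLO, hLOt, sub_self,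
    frobNorm_eq_zero_iff.2 rfl] at hd
  simp only [frobInner_zero_right] at hd
  linarith

lemma exists_memO_sub_dABW_sq_le {L V W : Mat d T} (hV : V ∈ VSet L) (hW : W ∈ VSet L)
    {u : ℝ} (hu : 0 ≤ u) :
    ∃ O, memO O ∧
      u ^ 2 * frobNorm V ^ 2 + u ^ 2 * frobNorm W ^ 2 - dABW (L + u • V) (L + u • W) ^ 2 ≤
        2 * u ^ 2 * frobInner V (W * O) - (1 - 2 * u) * frobNorm (L * O - L) ^ 2 := by
  obtain ⟨O, hO, hd⟩ := exists_memO_dABW_eq (L + u • V) (L + u • W)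
  refine ⟨O, hO, ?_⟩
  have hVO := frobInner_le_of_mem_VSet hV hO
  have hWO := frobInner_le_of_mem_VSet hW (memO_transpose hO)
  rw [frobNorm_mul_transpose_sub_self L hO.2] at hWO
  rw [hd, frobNorm_add_smul_sub_mul_sq _ _ _ hO.2]
  nlinarith [mul_le_mul_of_nonneg_left hVO hu, mul_le_mul_of_nonneg_left hWO hu]

lemma eventually_sub_dABW_sq_div_lt {L V W : Mat d T} (hV : V ∈ VSet L)
    (hW : W ∈ VSet L) {a : ℝ} (ha : ∀ O ∈ OStar L L, frobInner V (W * O) < a) :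
    ∀ᶠ u in 𝓝[>] 0,
      (u ^ 2 * frobNorm V ^ 2 + u ^ 2 * frobNorm W ^ 2 - dABW (L + u • V) (L + u • W) ^ 2) /
        (2 * u ^ 2) < a := by
  have hpenalty : ∀ᶠ c in atTop, ∀ O ∈ {O : Mat d T | memO O},
      frobInner V (W * O) - c * frobNorm (L * O - L) ^ 2 < a :=
    isCompact_setOf_memO.eventually_forall_sub_mul_lt (continuous_frobInner_mul V W)
      ((continuous_frobNorm.comp (by fun_prop)).pow 2) (fun _ _ => sq_nonneg _)
      fun O hO h0 => ha O <| mem_OStar_self_iff.2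
        ⟨hO, sub_eq_zero.1 (frobNorm_eq_zero_iff.1 (pow_eq_zero_iff two_ne_zero |>.1 h0))⟩
  have hweight : Tendsto (fun u : ℝ => (1 - 2 * u) / 2 * (u⁻¹ * u⁻¹)) (𝓝[>] 0) atTop :=
    Tendsto.pos_mul_atTop (C := 1 / 2) (by norm_num)
      (tendsto_nhdsWithin_of_tendsto_nhds <|
        (by fun_prop : Continuous fun u : ℝ => (1 - 2 * u) / 2).tendsto' 0 _ (by norm_num))
      (tendsto_inv_nhdsGT_zero.atTop_mul_atTop₀ tendsto_inv_nhdsGT_zero)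
  filter_upwards [hweight.eventually hpenalty, self_mem_nhdsWithin] with u hu hu0
  obtain ⟨O, hO, hle⟩ := exists_memO_sub_dABW_sq_le hV hW (le_of_lt hu0)
  refine lt_of_le_of_lt ?_ (hu O hO)
  have hu0' : u ≠ 0 := ne_of_gt hu0
  rw [div_le_iff₀ (by positivity)]
  refine hle.trans_eq ?_
  have hinv : u⁻¹ * u⁻¹ * u ^ 2 = 1 := by field_simp
  linear_combination (1 - 2 * u) * frobNorm (L * O - L) ^ 2 * hinv

end Angle

theorem stmt16_general (d T : ℕ) (L V W : Mat d T) (hV : V ∈ VSet L) (hW : W ∈ VSet L) :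
    Filter.Tendsto
      (fun u : ℝ =>
        (u ^ 2 * frobNorm V ^ 2 + u ^ 2 * frobNorm W ^ 2
            - dABW (L + u • V) (L + u • W) ^ 2) /
          (2 * u ^ 2 * frobNorm V * frobNorm W))
      (nhdsWithin 0 (Set.Ioi (0 : ℝ)))
      (nhds (sSup {r : ℝ | ∃ O ∈ OStar L L, r = frobInner V (W * O)} /
        (frobNorm V * frobNorm W))) := by
  have himage : {r : ℝ | ∃ O ∈ OStar L L, r = frobInner V (W * O)} =
      (fun O => frobInner V (W * O)) '' OStar L L := by
    ext; simp only [Set.mem_image, eq_comm, Set.mem_ofPred_eq]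
  have hcpt := (isCompact_OStar_self L).image (continuous_frobInner_mul V W)
  rw [himage]
  set S := sSup ((fun O => frobInner V (W * O)) '' OStar L L)
  obtain ⟨Omax, hOmax, hS⟩ : S ∈ _ :=
    hcpt.sSup_mem (Set.image_nonempty.2 ⟨1, mem_OStar_self_iff.2 ⟨memO_one, by simp⟩⟩)
  have hS : frobInner V (W * Omax) = S := hS
  have hlim : Tendsto (fun u : ℝ => (u ^ 2 * frobNorm V ^ 2 + u ^ 2 * frobNorm W ^ 2
      - dABW (L + u • V) (L + u • W) ^ 2) / (2 * u ^ 2)) (𝓝[>] 0) (𝓝 S) := by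
    refine tendsto_order.2 ⟨fun a ha => ?_, fun a ha => ?_⟩
    · filter_upwards [self_mem_nhdsWithin] with u (hu : 0 < u)
      rw [lt_div_iff₀ (by positivity)]
      rw [← hS] at ha
      nlinarith [sq_mul_frobInner_le_of_mem_OStar_self (V := V) (W := W) hOmax u,
        sq_pos_of_pos hu]
    · exact eventually_sub_dABW_sq_div_lt hV hW fun O hO =>
        (le_csSup hcpt.bddAbove (Set.mem_image_of_mem _ hO)).trans_lt ha
  refine (hlim.div_const (frobNorm V * frobNorm W)).congr fun u => ?_
  rw [div_div, ← mul_assoc (2 * u ^ 2)]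

/-- the cosine of the Alexandrov angle between the geodesics `u ↦ [L + uV]`
and `u ↦ [L + uW]` emanating from `[L]` equals
`sup_{O ∈ 𝐎*(L,L)} ⟨V, WO⟩_F / (‖V‖_F ‖W‖_F)`. -/
theorem stmt16 (d T : ℕ) (hd : 0 < d) (hT : 0 < T) (L V W : Mat d T)
    (hL : memL L) (hV : V ∈ VSet L) (hW : W ∈ VSet L) (hV0 : V ≠ 0) (hW0 : W ≠ 0) :
    Filter.Tendsto
      (fun u : ℝ =>
        (u ^ 2 * frobNorm V ^ 2 + u ^ 2 * frobNorm W ^ 2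
            - dABW (L + u • V) (L + u • W) ^ 2) /
          (2 * u ^ 2 * frobNorm V * frobNorm W))
      (nhdsWithin 0 (Set.Ioi (0 : ℝ)))
      (nhds (sSup {r : ℝ | ∃ O ∈ OStar L L, r = frobInner V (W * O)} /
        (frobNorm V * frobNorm W))) :=
  stmt16_general d T L V W hV hW
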